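/- Fix β>0, θ∈ℝ, s>0 and z>0, and let a:(0,∞)→(0,∞) be positive with a_t = o(t²) as t→∞ if θ=0, and a_t = o(e^{2β|θ|t}) as t→∞ if θ≠0. Then lim_{t→∞} q^θ_t(z, a_{t+s}) / q^θ_{t+s}(a_{t+s}) = e^{−2θ_− z} · z · e^{2β|θ|s}, where θ_− = max(−θ,0). (This is the pointwise density form of the local limit in the Kesten regime.) -/

import Mathlib

open MeasureTheory Filter

/-- `c^θ_t` from the paper, with time-scale parameter `β`. -/
noncomputable def cc (β θ t : ℝ) : ℝ :=
  if θ = 0 then 1 / (β * t) else 2 * θ / (Real.exp (2 * β * θ * t) - 1)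

/-- `c̃^θ_t` from the paper. -/
noncomputable def cct (β θ t : ℝ) : ℝ :=
  if θ = 0 then 1 / (β * t) else 2 * θ / (1 - Real.exp (-(2 * β * θ * t)))

/-- `u^θ(λ, t)` from the paper. -/
noncomputable def uu (β θ l t : ℝ) : ℝ :=
  if t = 0 then l else l * cc β θ t / (cct β θ t + l)

/-- entrance density `q^θ_t(x)`. -/
noncomputable def qe (β θ t x : ℝ) : ℝ :=
  cc β θ t * cct β θ t * Real.exp (-(cct β θ t * x))

/-- transition density `q^θ_t(x, y)`. -/
noncomputable def qt (β θ t x y : ℝ) : ℝ :=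
  x * cc β θ t * cct β θ t * Real.exp (-((x + y) * cc β θ t) - 2 * θ * y) *
    ∑' k : ℕ, (x * y * cc β θ t * cct β θ t) ^ k /
      ((Nat.factorial k : ℝ) * (Nat.factorial (k + 1) : ℝ))

/-- the space-time harmonic function `m^{α,θ}(t, z)`. -/
noncomputable def mm (β θ α t z : ℝ) : ℝ :=
  z * Real.exp (-(α / cc β θ t)) *
    ∑' i : ℕ, (α * z) ^ i * Real.exp (((i : ℝ) + 1) * (2 * β * θ * t)) /
      ((Nat.factorial i : ℝ) * (Nat.factorial (i + 1) : ℝ))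

/-- the space-time harmonic function `m̃^{α,θ}(t, z)`. -/
noncomputable def mmt (β θ α t z : ℝ) : ℝ :=
  z * Real.exp (2 * θ * z) * Real.exp (-(α / cct β θ t)) *
    ∑' i : ℕ, (α * z) ^ i * Real.exp (-(((i : ℝ) + 1) * (2 * β * θ * t))) /
      ((Nat.factorial i : ℝ) * (Nat.factorial (i + 1) : ℝ))

open Real Topology

/-!
Write `c = cc β θ`, `c̃ = cct β θ` and `y = a (t + s)`. Since `c̃ = c + 2θ`,
`q_t(z, y) / q_{t+s}(y) = z · (c_t c̃_t / c_{t+s} c̃_{t+s}) · e^{-z c_t} · e^{-y (c_t - c_{t+s})}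
  · S(z y c_t c̃_t)`
with `S` continuous and `S 0 = 1`. As `c` and `c̃` at `-θ` are `c̃` and `c` at `θ`, every factor
but `e^{-z c_t} → e^{-2θ₋ z}` depends only on `κ = |θ|`. The product `c_t c̃_t` is asymptotic to
a constant times `1 / kestenScale β κ t`: this gives the ratio `e^{2βκs}` and `y c_t c̃_t → 0`,
from which `y (c_t - c_{t+s}) → 0` follows (for `κ > 0` since `c_t = c_t c̃_t / c̃_t`, `c̃_t → 2κ`).
-/

/-- `x ↦ I₁(2√x)/√x`, with `I₁` the modified Bessel function: the series in `qt`. -/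
noncomputable def besselSeries (x : ℝ) : ℝ :=
  ∑' k : ℕ, x ^ k / ((Nat.factorial k : ℝ) * (Nat.factorial (k + 1) : ℝ))

theorem continuous_besselSeries : Continuous besselSeries := by
  refine continuous_iff_continuousAt.2 fun x => ?_
  have hbound : ∀ (k : ℕ), ∀ y ∈ Metric.closedBall (0 : ℝ) (|x| + 1),
      ‖y ^ k / ((Nat.factorial k : ℝ) * (Nat.factorial (k + 1) : ℝ))‖
        ≤ (|x| + 1) ^ k / (Nat.factorial k : ℝ) := by
    intro k y hy
    rw [mem_closedBall_zero_iff] at hy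
    have hk : (1 : ℝ) ≤ (Nat.factorial (k + 1) : ℝ) := by exact_mod_cast (k + 1).factorial_pos
    rw [norm_div, norm_pow, norm_of_nonneg (by positivity : (0 : ℝ) ≤ _ * _)]
    exact div_le_div₀ (by positivity) (pow_le_pow_left₀ (norm_nonneg y) hy k) (by positivity)
      (le_mul_of_one_le_right (by positivity) hk)
  refine (continuousOn_tsum (fun k => by fun_prop) (summable_pow_div_factorial _) hbound)
    |>.continuousAt (Metric.closedBall_mem_nhds_of_mem ?_)
  simp

theorem besselSeries_zero : besselSeries 0 = 1 := by
  rw [besselSeries, tsum_eq_single 0 fun k hk => by simp [hk]]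
  simp

theorem cc_neg (β θ t : ℝ) : cc β (-θ) t = cct β θ t := by
  rcases eq_or_ne θ 0 with rfl | hθ
  · simp [cc, cct]
  have hden : exp (2 * β * -θ * t) - 1 = -(1 - exp (-(2 * β * θ * t))) := by ring_nf
  rw [cc, cct, if_neg (neg_ne_zero.2 hθ), if_neg hθ, hden, div_neg, ← neg_div]
  ring

theorem cct_eq_cc_mul_exp {β θ : ℝ} (hθ : θ ≠ 0) (t : ℝ) :
    cct β θ t = cc β θ t * exp (2 * β * θ * t) := by
  have hE : 1 - (exp (2 * β * θ * t))⁻¹ = (exp (2 * β * θ * t) - 1) / exp (2 * β * θ * t) := by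
    field_simp
  rw [cc, cct, if_neg hθ, if_neg hθ, exp_neg, hE, div_div_eq_mul_div, div_mul_eq_mul_div]

theorem cct_eq_cc_add {β t : ℝ} (hβ : β ≠ 0) (ht : t ≠ 0) (θ : ℝ) :
    cct β θ t = cc β θ t + 2 * θ := by
  rcases eq_or_ne θ 0 with rfl | hθ
  · simp [cc, cct]
  have hE : exp (2 * β * θ * t) - 1 ≠ 0 := by
    rw [sub_ne_zero, Ne, exp_eq_one_iff]
    positivity
  have hcc : cc β θ t * (exp (2 * β * θ * t) - 1) = 2 * θ := by
    rw [cc, if_neg hθ, div_mul_cancel₀ _ hE]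
  rw [cct_eq_cc_mul_exp hθ]
  linear_combination hcc

theorem cc_eq_cc_abs_add {β t : ℝ} (hβ : β ≠ 0) (ht : t ≠ 0) (θ : ℝ) :
    cc β θ t = cc β |θ| t + 2 * max (-θ) 0 := by
  rcases le_or_gt 0 θ with hθ | hθ
  · simp [abs_of_nonneg hθ, hθ]
  · rw [abs_of_neg hθ, max_eq_left (by linarith), ← cct_eq_cc_add hβ ht, ← cc_neg, neg_neg]

theorem cc_abs_mul_cct_abs (β θ t : ℝ) :
    cc β |θ| t * cct β |θ| t = cc β θ t * cct β θ t := by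
  rcases abs_choice θ with h | h <;> rw [h]
  rw [cc_neg, ← cc_neg β (-θ), neg_neg, mul_comm]

theorem cc_pos {β t : ℝ} (hβ : 0 < β) (ht : 0 < t) (θ : ℝ) : 0 < cc β θ t := by
  have hβt := mul_pos hβ ht
  rw [cc]
  split_ifs with hθ
  · positivity
  rcases lt_or_gt_of_ne hθ with hθ | hθ
  · exact div_pos_of_neg_of_neg (by linarith)
      (sub_neg.2 (exp_lt_one_iff.2 (by nlinarith)))
  · exact div_pos (by linarith) (sub_pos.2 (one_lt_exp_iff.2 (by nlinarith)))

theorem cct_pos {β t : ℝ} (hβ : 0 < β) (ht : 0 < t) (θ : ℝ) : 0 < cct β θ t :=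
  cc_neg β θ t ▸ cc_pos hβ ht (-θ)

/-- The growth scale of the Kesten regime: `a_t` must be `o(kestenScale β |θ| t)`. -/
noncomputable def kestenScale (β κ t : ℝ) : ℝ :=
  if κ = 0 then t ^ 2 else exp (2 * β * κ * t)

theorem kestenScale_pos {t : ℝ} (ht : 0 < t) (β κ : ℝ) : 0 < kestenScale β κ t := by
  rw [kestenScale]
  split_ifs <;> positivity

theorem tendsto_add_div_self_atTop (s : ℝ) : Tendsto (fun t => (t + s) / t) atTop (𝓝 1) := by
  have h := (tendsto_inv_atTop_zero.const_mul s).const_add (1 : ℝ)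
  rw [mul_zero, add_zero] at h
  refine h.congr' ?_
  filter_upwards [eventually_ne_atTop 0] with t ht
  field_simp

theorem tendsto_kestenScale_add_div (β κ s : ℝ) :
    Tendsto (fun t => kestenScale β κ (t + s) / kestenScale β κ t) atTop
      (𝓝 (exp (2 * β * κ * s))) := by
  rcases eq_or_ne κ 0 with rfl | hκ
  · simpa [kestenScale, div_pow] using (tendsto_add_div_self_atTop s).pow 2
  · refine tendsto_const_nhds.congr fun t => ?_
    rw [kestenScale, kestenScale, if_neg hκ, if_neg hκ, eq_div_iff (exp_ne_zero _), ← exp_add]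
    ring_nf

theorem tendsto_cc_atTop_zero {β κ : ℝ} (hβ : 0 < β) (hκ : 0 ≤ κ) :
    Tendsto (cc β κ) atTop (𝓝 0) := by
  rcases hκ.eq_or_lt with rfl | hκ
  · refine (tendsto_inv_atTop_zero.comp (tendsto_id.const_mul_atTop hβ)).congr fun t => ?_
    simp [cc]
  · have hE : Tendsto (fun t => exp (2 * β * κ * t) - 1) atTop atTop :=
      tendsto_atTop_add_const_right _ _
        (tendsto_exp_atTop.comp (tendsto_id.const_mul_atTop (by positivity)))
    refine ((tendsto_const_nhds (x := 2 * κ)).div_atTop hE).congr fun t => ?_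
    simp [cc, hκ.ne']

theorem tendsto_cct_atTop {β κ : ℝ} (hβ : 0 < β) (hκ : 0 ≤ κ) :
    Tendsto (cct β κ) atTop (𝓝 (2 * κ)) := by
  refine (zero_add (2 * κ) ▸ (tendsto_cc_atTop_zero hβ hκ).add_const _).congr' ?_
  filter_upwards [eventually_ne_atTop 0] with t ht
  exact (cct_eq_cc_add hβ.ne' ht κ).symm

theorem exists_tendsto_cc_mul_cct_mul_kestenScale {β κ : ℝ} (hβ : 0 < β) (hκ : 0 ≤ κ) :
    ∃ K ≠ 0, Tendsto (fun t => cc β κ t * cct β κ t * kestenScale β κ t) atTop (𝓝 K) := by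
  rcases hκ.eq_or_lt with rfl | hκ
  · refine ⟨(β ^ 2)⁻¹, by positivity, tendsto_const_nhds.congr' ?_⟩
    filter_upwards [eventually_ne_atTop 0] with t ht
    simp only [cc, cct, kestenScale, if_true]
    field_simp
  · refine ⟨(2 * κ) ^ 2, by positivity, ((tendsto_cct_atTop hβ hκ.le).pow 2).congr fun t => ?_⟩
    rw [kestenScale, if_neg hκ.ne', mul_right_comm, ← cct_eq_cc_mul_exp hκ.ne', sq]

theorem tendsto_mul_cc_mul_cct_of_tendsto_div_kestenScale {β κ : ℝ} (hβ : 0 < β) (hκ : 0 ≤ κ)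
    {a : ℝ → ℝ} (ha : Tendsto (fun t => a t / kestenScale β κ t) atTop (𝓝 0)) :
    Tendsto (fun t => a t * (cc β κ t * cct β κ t)) atTop (𝓝 0) := by
  obtain ⟨K, -, hK⟩ := exists_tendsto_cc_mul_cct_mul_kestenScale hβ hκ
  refine (zero_mul K ▸ ha.mul hK).congr' ?_
  filter_upwards [eventually_gt_atTop 0] with t ht
  have := (kestenScale_pos ht β κ).ne'
  field_simp

theorem tendsto_cc_mul_cct_div_shift_of_nonneg {β κ : ℝ} (hβ : 0 < β) (hκ : 0 ≤ κ) (s : ℝ) :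
    Tendsto (fun t => cc β κ t * cct β κ t / (cc β κ (t + s) * cct β κ (t + s))) atTop
      (𝓝 (exp (2 * β * κ * s))) := by
  obtain ⟨K, hK0, hK⟩ := exists_tendsto_cc_mul_cct_mul_kestenScale hβ hκ
  have hKs := hK.comp (tendsto_atTop_add_const_right _ s tendsto_id)
  have h := (hK.div hKs hK0).mul (tendsto_kestenScale_add_div β κ s)
  rw [div_self hK0, one_mul] at h
  refine h.congr' ?_
  filter_upwards [eventually_gt_atTop 0, eventually_gt_atTop (-s)] with t ht hts
  have := (kestenScale_pos ht β κ).ne'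
  have := (kestenScale_pos (neg_lt_iff_pos_add.1 hts) β κ).ne'
  simp only [Pi.div_apply, Function.comp_apply, id]
  field_simp

theorem tendsto_cc_mul_cct_div_shift {β : ℝ} (hβ : 0 < β) (θ s : ℝ) :
    Tendsto (fun t => cc β θ t * cct β θ t / (cc β θ (t + s) * cct β θ (t + s))) atTop
      (𝓝 (exp (2 * β * |θ| * s))) := by
  simpa only [cc_abs_mul_cct_abs] using tendsto_cc_mul_cct_div_shift_of_nonneg hβ (abs_nonneg θ) s

theorem tendsto_mul_cc_mul_cct_of_shift {β θ s : ℝ} (hβ : 0 < β) {y : ℝ → ℝ}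
    (hy : Tendsto (fun t => y t * (cc β θ (t + s) * cct β θ (t + s))) atTop (𝓝 0)) :
    Tendsto (fun t => y t * (cc β θ t * cct β θ t)) atTop (𝓝 0) := by
  refine (zero_mul (exp (2 * β * |θ| * s)) ▸ hy.mul (tendsto_cc_mul_cct_div_shift hβ θ s)).congr' ?_
  filter_upwards [eventually_gt_atTop (-s)] with t hts
  have := (cc_pos hβ (neg_lt_iff_pos_add.1 hts) θ).ne'
  have := (cct_pos hβ (neg_lt_iff_pos_add.1 hts) θ).ne'
  field_simp

theorem tendsto_cc_atTop {β : ℝ} (hβ : 0 < β) (θ : ℝ) :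
    Tendsto (cc β θ) atTop (𝓝 (2 * max (-θ) 0)) := by
  refine (zero_add (2 * max (-θ) 0) ▸
    (tendsto_cc_atTop_zero hβ (abs_nonneg θ)).add_const _).congr' ?_
  filter_upwards [eventually_ne_atTop 0] with t ht
  exact (cc_eq_cc_abs_add hβ.ne' ht θ).symm

theorem tendsto_mul_cc_sub_cc_shift_of_nonneg {β κ s : ℝ} (hβ : 0 < β) (hκ : 0 ≤ κ)
    {y : ℝ → ℝ} (hy : Tendsto (fun t => y t * (cc β κ (t + s) * cct β κ (t + s))) atTop (𝓝 0)) :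
    Tendsto (fun t => y t * (cc β κ t - cc β κ (t + s))) atTop (𝓝 0) := by
  rcases hκ.eq_or_lt with rfl | hκ
  · refine (zero_mul (s * β) ▸ (mul_one (s * β) ▸ hy.mul
      ((tendsto_add_div_self_atTop s).const_mul (s * β)))).congr' ?_
    filter_upwards [eventually_gt_atTop 0, eventually_gt_atTop (-s)] with t ht hts
    have := (neg_lt_iff_pos_add.1 hts).ne'
    simp only [cc, cct, if_true]
    field_simp
    ring
  have hcct := tendsto_cct_atTop hβ hκ.le
  have hκ2 : 2 * κ ≠ 0 := by positivity
  have h := ((tendsto_mul_cc_mul_cct_of_shift hβ hy).div hcct hκ2).sub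
    (hy.div (hcct.comp (tendsto_atTop_add_const_right _ s tendsto_id)) hκ2)
  rw [zero_div, sub_zero] at h
  refine h.congr' ?_
  filter_upwards [eventually_gt_atTop 0, eventually_gt_atTop (-s)] with t ht hts
  have := (cct_pos hβ ht κ).ne'
  have := (cct_pos hβ (neg_lt_iff_pos_add.1 hts) κ).ne'
  simp only [Pi.div_apply, Function.comp_apply, id]
  field_simp

theorem tendsto_mul_cc_sub_cc_shift {β θ s : ℝ} (hβ : 0 < β) {y : ℝ → ℝ}
    (hy : Tendsto (fun t => y t * (cc β θ (t + s) * cct β θ (t + s))) atTop (𝓝 0)) :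
    Tendsto (fun t => y t * (cc β θ t - cc β θ (t + s))) atTop (𝓝 0) := by
  have hy' : Tendsto (fun t => y t * (cc β |θ| (t + s) * cct β |θ| (t + s))) atTop (𝓝 0) := by
    simpa only [cc_abs_mul_cct_abs] using hy
  refine (tendsto_mul_cc_sub_cc_shift_of_nonneg hβ (abs_nonneg θ) hy').congr' ?_
  filter_upwards [eventually_ne_atTop 0, eventually_ne_atTop (-s)] with t ht hts
  rw [cc_eq_cc_abs_add hβ.ne' ht θ, cc_eq_cc_abs_add hβ.ne' (by grind) θ]
  ring

theorem qt_div_qe_eq {β t s : ℝ} (hβ : 0 < β) (hts : 0 < t + s) (θ z y : ℝ) :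
    qt β θ t z y / qe β θ (t + s) y
      = z * (cc β θ t * cct β θ t / (cc β θ (t + s) * cct β θ (t + s)))
        * exp (-(z * cc β θ t)) * exp (-(y * (cc β θ t - cc β θ (t + s))))
        * besselSeries (z * y * cc β θ t * cct β θ t) := by
  have := (cc_pos hβ hts θ).ne'
  have := (cct_pos hβ hts θ).ne'
  have hexp : exp (-((z + y) * cc β θ t) - 2 * θ * y)
      = exp (-(z * cc β θ t)) * exp (-(y * (cc β θ t - cc β θ (t + s))))
        * exp (-(cct β θ (t + s) * y)) := by
    rw [← exp_add, ← exp_add, cct_eq_cc_add hβ.ne' hts.ne']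
    ring_nf
  rw [qt, qe, besselSeries, hexp]
  have := exp_ne_zero (-(cct β θ (t + s) * y))
  field_simp

theorem tendsto_qt_div_qe {β : ℝ} (hβ : 0 < β) (θ s z : ℝ) {y : ℝ → ℝ}
    (hy : Tendsto (fun t => y t * (cc β θ (t + s) * cct β θ (t + s))) atTop (𝓝 0)) :
    Tendsto (fun t => qt β θ t z (y t) / qe β θ (t + s) (y t)) atTop
      (𝓝 (z * exp (2 * β * |θ| * s) * exp (-(z * (2 * max (-θ) 0))))) := by
  have hB : Tendsto (fun t => besselSeries (z * y t * cc β θ t * cct β θ t)) atTop (𝓝 1) := by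
    rw [← besselSeries_zero]
    refine continuous_besselSeries.continuousAt.tendsto.comp ?_
    simpa only [mul_zero, mul_assoc] using (tendsto_mul_cc_mul_cct_of_shift hβ hy).const_mul z
  have hE := (continuous_exp.tendsto _).comp ((tendsto_cc_atTop hβ θ).const_mul z).neg
  have hD := (continuous_exp.tendsto _).comp (tendsto_mul_cc_sub_cc_shift hβ hy).neg
  have h := ((((tendsto_cc_mul_cct_div_shift hβ θ s).const_mul z).mul hE).mul hD).mul hB
  rw [neg_zero, exp_zero, mul_one, mul_one] at h
  refine h.congr' ?_
  filter_upwards [eventually_gt_atTop (-s)] with t hts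
  exact (qt_div_qe_eq hβ (neg_lt_iff_pos_add.1 hts) θ z (y t)).symm

theorem kesten_regime_local_limit_general (β θ s z : ℝ) (hβ : 0 < β)
    (a : ℝ → ℝ)
    (ha0 : θ = 0 → Filter.Tendsto (fun t => a t / t ^ 2) Filter.atTop (nhds 0))
    (ha1 : θ ≠ 0 →
      Filter.Tendsto (fun t => a t / Real.exp (2 * β * |θ| * t)) Filter.atTop (nhds 0)) :
    Filter.Tendsto (fun t => qt β θ t z (a (t + s)) / qe β θ (t + s) (a (t + s)))
      Filter.atTop
      (nhds (Real.exp (-(2 * max (-θ) 0 * z)) * z * Real.exp (2 * β * |θ| * s))) := by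
  have hscale : Tendsto (fun t => a t / kestenScale β |θ| t) atTop (𝓝 0) := by
    rcases eq_or_ne θ 0 with hθ | hθ
    · simpa [kestenScale, hθ] using ha0 hθ
    · simpa [kestenScale, hθ] using ha1 hθ
  have hy := (tendsto_mul_cc_mul_cct_of_tendsto_div_kestenScale hβ (abs_nonneg θ) hscale).comp
    (tendsto_atTop_add_const_right _ s tendsto_id)
  simp only [Function.comp_def, id, cc_abs_mul_cct_abs] at hy
  convert tendsto_qt_div_qe hβ θ s z hy using 2
  ring_nf

/-- Pointwise density form of the local limit in the Kesten regime: if `a` is positive with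
`a_t = o(t²)` (case `θ = 0`) or `a_t = o(e^{2β|θ|t})` (case `θ ≠ 0`) as `t → ∞`, then for
`s > 0` and `z > 0`,
`q^θ_t(z, a_{t+s}) / q^θ_{t+s}(a_{t+s}) → e^{-2θ₋z} · z · e^{2β|θ|s}` as `t → ∞`. -/
theorem kesten_regime_local_limit (β θ s z : ℝ) (hβ : 0 < β) (hs : 0 < s) (hz : 0 < z)
    (a : ℝ → ℝ) (hapos : ∀ t : ℝ, 0 < t → 0 < a t)
    (ha0 : θ = 0 → Filter.Tendsto (fun t => a t / t ^ 2) Filter.atTop (nhds 0))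
    (ha1 : θ ≠ 0 →
      Filter.Tendsto (fun t => a t / Real.exp (2 * β * |θ| * t)) Filter.atTop (nhds 0)) :
    Filter.Tendsto (fun t => qt β θ t z (a (t + s)) / qe β θ (t + s) (a (t + s)))
      Filter.atTop
      (nhds (Real.exp (-(2 * max (-θ) 0 * z)) * z * Real.exp (2 * β * |θ| * s))) :=
  kesten_regime_local_limit_general β θ s z hβ a ha0 ha1
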